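/- (Proposition 12, stopping criterion for interval set-based value iteration) Let C̲, C̄ be cost matrices with C̲ s a ≤ C̄ s a for all s, a, let 𝒞 = {C : C̲ s a ≤ C s a ≤ C̄ s a for all s, a}, and let 𝒱* be the unique nonempty compact fixed point set of F_𝒞. Starting from any box 𝒱⁰ = {V : V̲⁰ ≤ V ≤ V̄⁰ componentwise} with V̲⁰ ≤ V̄⁰, define the iterates 𝒱^{k+1} = F_𝒞(𝒱^k). Then d_H(𝒱^k, 𝒱*) → 0 as k → ∞; moreover, for every ε > 0 and every k ≥ 1, if d_H(𝒱^{k+1}, 𝒱^k) < ε (1 − γ)/(2γ) then d_H(𝒱^{k+1}, 𝒱*) ≤ ε/2. -/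

import Mathlib

/-
Each `bellman S A P γ C` is a `γ`-contraction for the sup norm, because minimising over actions
and averaging against the stochastic kernel `P` are both `1`-Lipschitz. Hence `setBellman`, the
closure of a union of images of `γ`-Lipschitz maps, contracts the Hausdorff distance by `γ` on
nonempty bounded sets, and the interval iterates stay nonempty and bounded. So
`d_H(𝒱ᵏ, 𝒱*) ≤ γᵏ d_H(𝒱⁰, 𝒱*)`, and the triangle inequality through `𝒱ᵏ⁺¹` gives the
a-posteriori bound `(1 - γ) d_H(𝒱ᵏ⁺¹, 𝒱*) ≤ γ d_H(𝒱ᵏ⁺¹, 𝒱ᵏ)`.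
-/

open Metric

/-- The Bellman operator for a discounted MDP with transition kernel `P`,
discount factor `γ` and cost matrix `C`. -/
noncomputable def bellman (S A : ℕ) (P : Fin S → Fin S → Fin A → ℝ) (γ : ℝ)
    (C : Fin S → Fin A → ℝ) (V : Fin S → ℝ) : Fin S → ℝ :=
  fun s => ⨅ a : Fin A, (C s a + γ * ∑ s' : Fin S, P s' s a * V s')

/-- The set-based Bellman operator associated with a set `𝒞` of cost matrices. -/
noncomputable def setBellman (S A : ℕ) (P : Fin S → Fin S → Fin A → ℝ) (γ : ℝ)
    (𝒞 : Set (Fin S → Fin A → ℝ)) (𝒱 : Set (Fin S → ℝ)) : Set (Fin S → ℝ) :=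
  closure (⋃ C ∈ 𝒞, ⋃ V ∈ 𝒱, {bellman S A P γ C V})

open Set Bornology
open scoped NNReal ENNReal

theorem dist_ciInf_le_dist {ι : Type*} [Fintype ι] [Nonempty ι] (f g : ι → ℝ) :
    dist (⨅ i, f i) (⨅ i, g i) ≤ dist f g := by
  have key : ∀ f g : ι → ℝ, (⨅ i, f i) - dist f g ≤ ⨅ i, g i := fun f g =>
    le_ciInf fun i => by
      have hfg := (le_abs_self _).trans ((Real.dist_eq _ _).symm.trans_le (dist_le_pi_dist f g i))
      linarith [ciInf_le (Finite.bddBelow_range f) i]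
  rw [Real.dist_eq, abs_sub_le_iff]
  exact ⟨by linarith [key f g], by linarith [key g f, dist_comm f g]⟩

theorem dist_sum_mul_le_of_sum_eq_one {ι : Type*} [Fintype ι] {w : ι → ℝ} (hw₀ : ∀ i, 0 ≤ w i)
    (hw₁ : ∑ i, w i = 1) (x y : ι → ℝ) :
    dist (∑ i, w i * x i) (∑ i, w i * y i) ≤ dist x y :=
  calc dist (∑ i, w i * x i) (∑ i, w i * y i) = |∑ i, w i * (x i - y i)| := by
        simp only [Real.dist_eq, mul_sub, Finset.sum_sub_distrib]
    _ ≤ ∑ i, w i * dist x y := by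
        refine (Finset.abs_sum_le_sum_abs _ _).trans (Finset.sum_le_sum fun i _ => ?_)
        rw [abs_mul, abs_of_nonneg (hw₀ i), ← Real.dist_eq]
        exact mul_le_mul_of_nonneg_left (dist_le_pi_dist x y i) (hw₀ i)
    _ = dist x y := by rw [← Finset.sum_mul, hw₁, one_mul]

-- `hK` excludes `K = 0`, where `K * infEDist x ∅ = 0 * ⊤ = 0`.
theorem LipschitzWith.infEDist_image_le {X Y : Type*} [PseudoEMetricSpace X]
    [PseudoEMetricSpace Y] {K : ℝ≥0} {f : X → Y} (hf : LipschitzWith K f) (hK : K ≠ 0)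
    (x : X) (t : Set X) : infEDist (f x) (f '' t) ≤ K * infEDist x t := by
  simp only [infEDist, iInf_image, ENNReal.mul_iInf_of_ne (ENNReal.coe_ne_zero.2 hK)
    ENNReal.coe_ne_top]
  exact iInf₂_mono fun y _ => hf x y

theorem LipschitzWith.hausdorffEDist_image_le {X Y : Type*} [PseudoEMetricSpace X]
    [PseudoEMetricSpace Y] {K : ℝ≥0} {f : X → Y} (hf : LipschitzWith K f) (hK : K ≠ 0)
    (s t : Set X) : hausdorffEDist (f '' s) (f '' t) ≤ K * hausdorffEDist s t := by
  refine hausdorffEDist_le_of_infEDist ?_ ?_ <;> rintro _ ⟨x, hx, rfl⟩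
  · exact (hf.infEDist_image_le hK x t).trans
      (mul_le_mul_right (infEDist_le_hausdorffEDist_of_mem hx) _)
  · exact (hf.infEDist_image_le hK x s).trans
      (mul_le_mul_right (hausdorffEDist_comm (s := s) ▸ infEDist_le_hausdorffEDist_of_mem hx) _)

theorem hausdorffEDist_image2_le {ι X Y : Type*} [PseudoEMetricSpace X] [PseudoEMetricSpace Y]
    {K : ℝ≥0} {f : ι → X → Y} {I : Set ι} (hf : ∀ i ∈ I, LipschitzWith K (f i)) (hK : K ≠ 0)
    (s t : Set X) : hausdorffEDist (image2 f I s) (image2 f I t) ≤ K * hausdorffEDist s t := by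
  rw [← iUnion_image_left, ← iUnion_image_left]
  refine hausdorffEDist_iUnion_le.trans <| iSup_le fun i => ?_
  refine hausdorffEDist_iUnion_le.trans <| iSup_le fun hi => ?_
  exact (hf i hi).hausdorffEDist_image_le hK s t

theorem one_sub_mul_hausdorffDist_le {X : Type*} [PseudoMetricSpace X] {U U' W : Set X} {γ : ℝ}
    (hγ : 0 ≤ γ) (hUU' : hausdorffEDist U U' ≠ ⊤)
    (hstep : hausdorffDist U' W ≤ γ * hausdorffDist U W) :
    (1 - γ) * hausdorffDist U' W ≤ γ * hausdorffDist U' U := by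
  have htri := mul_le_mul_of_nonneg_left (hausdorffDist_triangle (u := W) hUU') hγ
  rw [mul_add, hausdorffDist_comm (s := U) (t := U')] at htri
  linarith

theorem tendsto_zero_of_le_mul_of_lt_one {d : ℕ → ℝ} {γ : ℝ} (hγ₀ : 0 ≤ γ) (hγ₁ : γ < 1)
    (hd : ∀ k, 0 ≤ d k) (hstep : ∀ k, d (k + 1) ≤ γ * d k) :
    Filter.Tendsto d Filter.atTop (nhds 0) := by
  have hgeom : ∀ k, d k ≤ d 0 * γ ^ k := by
    intro k
    induction k with
    | zero => simp
    | succ k ih => calc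
        d (k + 1) ≤ γ * d k := hstep k
        _ ≤ γ * (d 0 * γ ^ k) := mul_le_mul_of_nonneg_left ih hγ₀
        _ = d 0 * γ ^ (k + 1) := by ring
  refine squeeze_zero hd hgeom ?_
  simpa using (tendsto_pow_atTop_nhds_zero_of_lt_one hγ₀ hγ₁).const_mul (d 0)

section Bellman

variable {S A : ℕ} {P : Fin S → Fin S → Fin A → ℝ} {γ : ℝ}

theorem dist_bellman_le [NeZero A] (hP₀ : ∀ s' s a, 0 ≤ P s' s a)
    (hP₁ : ∀ s a, ∑ s', P s' s a = 1) (hγ : 0 ≤ γ) (C C' : Fin S → Fin A → ℝ)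
    (V V' : Fin S → ℝ) :
    dist (bellman S A P γ C V) (bellman S A P γ C' V') ≤ dist C C' + γ * dist V V' := by
  refine (dist_pi_le_iff (by positivity)).2 fun s => (dist_ciInf_le_dist _ _).trans ?_
  refine (dist_pi_le_iff (by positivity)).2 fun a => (dist_add_add_le _ _ _ _).trans ?_
  refine add_le_add ((dist_le_pi_dist _ _ a).trans (dist_le_pi_dist C C' s)) ?_
  rw [Real.dist_eq, ← mul_sub, abs_mul, abs_of_nonneg hγ, ← Real.dist_eq]
  exact mul_le_mul_of_nonneg_left
    (dist_sum_mul_le_of_sum_eq_one (fun s' => hP₀ s' s a) (hP₁ s a) V V') hγ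

theorem lipschitzWith_bellman [NeZero A] (hP₀ : ∀ s' s a, 0 ≤ P s' s a)
    (hP₁ : ∀ s a, ∑ s', P s' s a = 1) (hγ : 0 ≤ γ) (C : Fin S → Fin A → ℝ) :
    LipschitzWith γ.toNNReal (bellman S A P γ C) :=
  LipschitzWith.of_dist_le_mul fun V V' => by
    simpa [Real.coe_toNNReal _ hγ] using dist_bellman_le hP₀ hP₁ hγ C C V V'

theorem setBellman_eq_closure_image2 (𝒞 : Set (Fin S → Fin A → ℝ)) (𝒱 : Set (Fin S → ℝ)) :
    setBellman S A P γ 𝒞 𝒱 = closure (image2 (bellman S A P γ) 𝒞 𝒱) := by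
  rw [setBellman, image2_eq_iUnion]

theorem Set.Nonempty.setBellman {𝒞 : Set (Fin S → Fin A → ℝ)} {𝒱 : Set (Fin S → ℝ)}
    (h𝒞 : 𝒞.Nonempty) (h𝒱 : 𝒱.Nonempty) : (setBellman S A P γ 𝒞 𝒱).Nonempty := by
  rw [setBellman_eq_closure_image2]
  exact (h𝒞.image2 h𝒱).closure

theorem Bornology.IsBounded.setBellman [NeZero A] (hP₀ : ∀ s' s a, 0 ≤ P s' s a)
    (hP₁ : ∀ s a, ∑ s', P s' s a = 1) (hγ : 0 ≤ γ) {𝒞 : Set (Fin S → Fin A → ℝ)}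
    {𝒱 : Set (Fin S → ℝ)} (h𝒞 : IsBounded 𝒞) (h𝒱 : IsBounded 𝒱) :
    IsBounded (setBellman S A P γ 𝒞 𝒱) := by
  rw [setBellman_eq_closure_image2]
  refine (LipschitzOnWith.isBounded_image2 _ (K₁ := 1) h𝒞 h𝒱 (fun V _ => ?_)
    fun C _ => (lipschitzWith_bellman hP₀ hP₁ hγ C).lipschitzOnWith).closure
  refine LipschitzWith.lipschitzOnWith (LipschitzWith.of_dist_le_mul fun C C' => ?_)
  simpa using dist_bellman_le hP₀ hP₁ hγ C C' V V

theorem hausdorffDist_setBellman_le [NeZero A] (hP₀ : ∀ s' s a, 0 ≤ P s' s a)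
    (hP₁ : ∀ s a, ∑ s', P s' s a = 1) (hγ : 0 < γ) (𝒞 : Set (Fin S → Fin A → ℝ))
    {𝒱 𝒲 : Set (Fin S → ℝ)} (h : hausdorffEDist 𝒱 𝒲 ≠ ⊤) :
    hausdorffDist (setBellman S A P γ 𝒞 𝒱) (setBellman S A P γ 𝒞 𝒲) ≤
      γ * hausdorffDist 𝒱 𝒲 := by
  rw [setBellman_eq_closure_image2, setBellman_eq_closure_image2, hausdorffDist_closure]
  calc hausdorffDist (image2 (bellman S A P γ) 𝒞 𝒱) (image2 (bellman S A P γ) 𝒞 𝒲)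
      ≤ (γ.toNNReal * hausdorffEDist 𝒱 𝒲).toReal :=
        ENNReal.toReal_mono (ENNReal.mul_ne_top ENNReal.coe_ne_top h) <|
          hausdorffEDist_image2_le (fun C _ => lipschitzWith_bellman hP₀ hP₁ hγ.le C)
            (by simpa using hγ) 𝒱 𝒲
    _ = γ * hausdorffDist 𝒱 𝒲 := by
        rw [ENNReal.toReal_mul, ENNReal.coe_toReal, Real.coe_toNNReal _ hγ.le, hausdorffDist]

end Bellman

theorem setBellman_interval_stopping_criterion_general (S A : ℕ) (hA : 0 < A)
    (P : Fin S → Fin S → Fin A → ℝ)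
    (hP0 : ∀ s' s a, 0 ≤ P s' s a)
    (hP1 : ∀ s a, ∑ s' : Fin S, P s' s a = 1)
    (γ : ℝ) (hγ : γ ∈ Set.Ioo (0 : ℝ) 1)
    (Cl Cu : Fin S → Fin A → ℝ) (hC : ∀ s a, Cl s a ≤ Cu s a)
    (Vstar : Set (Fin S → ℝ)) (hVne : Vstar.Nonempty) (hVc : IsCompact Vstar)
    (hVfix : setBellman S A P γ {C | ∀ s a, Cl s a ≤ C s a ∧ C s a ≤ Cu s a} Vstar = Vstar)
    (Vl0 Vu0 : Fin S → ℝ) (hV0 : Vl0 ≤ Vu0)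
    (Vseq : ℕ → Set (Fin S → ℝ))
    (hVseq0 : Vseq 0 = {V : Fin S → ℝ | Vl0 ≤ V ∧ V ≤ Vu0})
    (hVseq : ∀ k, Vseq (k + 1) =
      setBellman S A P γ {C | ∀ s a, Cl s a ≤ C s a ∧ C s a ≤ Cu s a} (Vseq k)) :
    Filter.Tendsto (fun k => hausdorffDist (Vseq k) Vstar) Filter.atTop (nhds 0) ∧
    ∀ ε : ℝ, 0 < ε → ∀ k : ℕ, 1 ≤ k →
      hausdorffDist (Vseq (k + 1)) (Vseq k) < ε * (1 - γ) / (2 * γ) →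
      hausdorffDist (Vseq (k + 1)) Vstar ≤ ε / 2 := by
  obtain ⟨hγ₀, hγ₁⟩ := hγ
  have : NeZero A := NeZero.of_pos hA
  set 𝒞 := {C : Fin S → Fin A → ℝ | ∀ s a, Cl s a ≤ C s a ∧ C s a ≤ Cu s a}
  have h𝒞 : 𝒞.Nonempty ∧ IsBounded 𝒞 :=
    ⟨⟨Cl, fun s a => ⟨le_rfl, hC s a⟩⟩, isCompact_Icc.isBounded.subset fun C hC =>
      ⟨fun s a => (hC s a).1, fun s a => (hC s a).2⟩⟩
  have hiter : ∀ k, (Vseq k).Nonempty ∧ IsBounded (Vseq k) := by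
    intro k
    induction k with
    | zero => exact hVseq0 ▸ ⟨⟨Vl0, le_rfl, hV0⟩, isCompact_Icc.isBounded⟩
    | succ k ih => exact hVseq k ▸ ⟨h𝒞.1.setBellman ih.1, h𝒞.2.setBellman hP0 hP1 hγ₀.le ih.2⟩
  have hfin : ∀ {U W : Set (Fin S → ℝ)}, U.Nonempty ∧ IsBounded U →
      W.Nonempty ∧ IsBounded W → hausdorffEDist U W ≠ ⊤ := fun hU hW =>
    hausdorffEDist_ne_top_of_nonempty_of_bounded hU.1 hW.1 hU.2 hW.2
  have hstep : ∀ k, hausdorffDist (Vseq (k + 1)) Vstar ≤ γ * hausdorffDist (Vseq k) Vstar := by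
    intro k
    have h := hausdorffDist_setBellman_le hP0 hP1 hγ₀ 𝒞 (hfin (hiter k) ⟨hVne, hVc.isBounded⟩)
    rwa [hVfix, ← hVseq k] at h
  refine ⟨tendsto_zero_of_le_mul_of_lt_one hγ₀.le hγ₁ (fun _ => hausdorffDist_nonneg) hstep, ?_⟩
  intro ε _ k _ hk
  refine le_of_mul_le_mul_left ?_ (sub_pos.2 hγ₁)
  calc (1 - γ) * hausdorffDist (Vseq (k + 1)) Vstar
      ≤ γ * hausdorffDist (Vseq (k + 1)) (Vseq k) :=
        one_sub_mul_hausdorffDist_le hγ₀.le (hfin (hiter k) (hiter (k + 1))) (hstep k)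
    _ ≤ γ * (ε * (1 - γ) / (2 * γ)) := mul_le_mul_of_nonneg_left hk.le hγ₀.le
    _ = (1 - γ) * (ε / 2) := by field_simp

theorem setBellman_interval_stopping_criterion (S A : ℕ) (hS : 0 < S) (hA : 0 < A)
    (P : Fin S → Fin S → Fin A → ℝ)
    (hP0 : ∀ s' s a, 0 ≤ P s' s a)
    (hP1 : ∀ s a, ∑ s' : Fin S, P s' s a = 1)
    (γ : ℝ) (hγ : γ ∈ Set.Ioo (0 : ℝ) 1)
    (Cl Cu : Fin S → Fin A → ℝ) (hC : ∀ s a, Cl s a ≤ Cu s a)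
    (Vstar : Set (Fin S → ℝ)) (hVne : Vstar.Nonempty) (hVc : IsCompact Vstar)
    (hVfix : setBellman S A P γ {C | ∀ s a, Cl s a ≤ C s a ∧ C s a ≤ Cu s a} Vstar = Vstar)
    (Vl0 Vu0 : Fin S → ℝ) (hV0 : Vl0 ≤ Vu0)
    (Vseq : ℕ → Set (Fin S → ℝ))
    (hVseq0 : Vseq 0 = {V : Fin S → ℝ | Vl0 ≤ V ∧ V ≤ Vu0})
    (hVseq : ∀ k, Vseq (k + 1) =
      setBellman S A P γ {C | ∀ s a, Cl s a ≤ C s a ∧ C s a ≤ Cu s a} (Vseq k)) :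
    Filter.Tendsto (fun k => hausdorffDist (Vseq k) Vstar) Filter.atTop (nhds 0) ∧
    ∀ ε : ℝ, 0 < ε → ∀ k : ℕ, 1 ≤ k →
      hausdorffDist (Vseq (k + 1)) (Vseq k) < ε * (1 - γ) / (2 * γ) →
      hausdorffDist (Vseq (k + 1)) Vstar ≤ ε / 2 :=
  setBellman_interval_stopping_criterion_general S A hA P hP0 hP1 γ hγ Cl Cu hC Vstar hVne hVc hVfix
    Vl0 Vu0 hV0 Vseq hVseq0 hVseq
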